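/- For every natural number n ≥ 1 and every j ∈ {0,1,…,n}, the following identity holds in the field ℚ(X,Z) of rational functions: ∑_{I ⊆ {0,1,…,n−1} with min(I ∪ {n}) = j} binom(n,I)_{X^{−1}} · ∏_{i ∈ I} gp((X^{i}·Z)^{n−i}) = binom(n,j)_X · Z^{n−j} / (X^{j}·Z; X)_{n−j}. -/

import Mathlib

/-!
STATEMENT 2: the identity (equ:S) for the partial sums `S_{n,j}(X,Z)` in ℚ(X,Z).
-/

noncomputable section

open scoped Classical

/-- The Pochhammer symbol `(A; X)_k = ∏_{i=0}^{k-1} (1 - A·X^i)`. -/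
def qPoch {F : Type*} [CommRing F] (A X : F) (k : ℕ) : F :=
  ∏ i ∈ Finset.range k, (1 - A * X ^ i)

/-- `(N)_X! = ∏_{k=1}^{N} (1 - X^k)`, with `(0)_X! = 1`. -/
def qFact {F : Type*} [CommRing F] (X : F) (N : ℕ) : F :=
  ∏ k ∈ Finset.range N, (1 - X ^ (k + 1))

/-- The Gaussian binomial `binom(a,b)_X = (a)_X! / ((a-b)_X! · (b)_X!)`. -/
def qBinom {F : Type*} [Field F] (X : F) (a b : ℕ) : F :=
  qFact X a / (qFact X (a - b) * qFact X b)

/-- The Gaussian multinomial `binom(n,I)_X` for `I = {i_1 < … < i_l}`. -/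
def qMultinom {F : Type*} [Field F] (X : F) (n : ℕ) (I : Finset ℕ) : F :=
  (((I.sort (· ≤ ·)).zip ((I.sort (· ≤ ·)).tail ++ [n])).map
    (fun p => qBinom X p.2 p.1)).prod

/-- `i_1 = min (I ∪ {n})`. -/
def minI (n : ℕ) (I : Finset ℕ) : ℕ := (insert n I).min' (Finset.insert_nonempty n I)

/-- `gp(T) = T/(1-T)`. -/
def gp {F : Type*} [DivisionRing F] (T : F) : F := T / (1 - T)

/-- The field ℚ(X,Z). -/
abbrev F2 : Type := FractionRing (MvPolynomial (Fin 2) ℚ)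

def XX : F2 := algebraMap (MvPolynomial (Fin 2) ℚ) F2 (MvPolynomial.X 0)
def ZZ : F2 := algebraMap (MvPolynomial (Fin 2) ℚ) F2 (MvPolynomial.X 1)

/-!
Removing the least element `j` of `I` turns `binom(n,I)` into `binom(i,j) · binom(n,I \ {j})`, where
`i` is the next element of `I ∪ {n}`. Hence `S_{n,n} = 1` and, for `j < n`,
`S_{n,j} = gp((X^j Z)^{n-j}) · ∑_{j < j' ≤ n} binom(j',j)_{X⁻¹} S_{n,j'}`, which determines every
`S_{n,j}` by downward induction on `j`. The right-hand side obeys the same recursion: with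
`W = X^j Z` and `m = n - j`, the identities `binom(j+k,j)_{X⁻¹} = X^{-jk} binom(j+k,j)_X`,
`binom(j+k,j)_X binom(n,j+k)_X = binom(n,j)_X binom(m,k)_X` and `(W;X)_m = (W;X)_k (W X^k;X)_{m-k}`
turn the sum into `∑_{k=1}^m binom(m,k)_X W^{m-k} (W;X)_k`, which equals `1 - W^m` by the q-binomial
theorem `∑_{k=0}^m binom(m,k)_X W^{m-k} (W;X)_k = 1`.
-/

open Finset

lemma add_add_one_choose_two (b c : ℕ) :
    (b + c + 1).choose 2 = (b + 1).choose 2 + (c + 1).choose 2 + b * c := by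
  induction c with
  | zero => simp
  | succ c ih =>
    rw [← add_assoc, Nat.choose_succ_succ', ih, Nat.choose_succ_succ' (c + 1)]
    simp only [Nat.choose_one_right]
    ring

lemma sum_range_add_two_of_pascal {M : Type*} [AddCommMonoid M] {t u v : ℕ → M} {m : ℕ}
    (h_zero : t 0 = u 0) (h_last : t (m + 1) = v m)
    (h_succ : ∀ k < m, t (k + 1) = u (k + 1) + v k) :
    ∑ k ∈ range (m + 2), t k = ∑ k ∈ range (m + 1), (u k + v k) := by
  rw [sum_range_succ', sum_range_succ, sum_congr rfl fun k hk => h_succ k (mem_range.1 hk),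
    sum_add_distrib, h_zero, h_last, sum_add_distrib, sum_range_succ' u, sum_range_succ v]
  abel

section CommRing

variable {R : Type*} [CommRing R]

lemma one_sub_pow_ne_zero_of_not_isOfFinOrder {q : R} (hq : ¬IsOfFinOrder q) {k : ℕ}
    (hk : k ≠ 0) :
    1 - q ^ k ≠ 0 :=
  sub_ne_zero.2 fun h => hq (isOfFinOrder_iff_pow_eq_one.2 ⟨k, Nat.pos_of_ne_zero hk, h.symm⟩)

lemma qFact_zero (q : R) : qFact q 0 = 1 :=
  prod_range_zero _

lemma qFact_succ (q : R) (N : ℕ) : qFact q (N + 1) = qFact q N * (1 - q ^ (N + 1)) :=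
  prod_range_succ _ _

lemma qPoch_zero (A q : R) : qPoch A q 0 = 1 :=
  prod_range_zero _

lemma qPoch_succ (A q : R) (k : ℕ) : qPoch A q (k + 1) = qPoch A q k * (1 - A * q ^ k) :=
  prod_range_succ _ _

lemma qPoch_add (A q : R) (k l : ℕ) :
    qPoch A q (k + l) = qPoch A q k * qPoch (A * q ^ k) q l := by
  simp only [qPoch, prod_range_add, pow_add, mul_assoc]

end CommRing

section QAnalogues

variable {K : Type*} [Field K] {q : K}

lemma qFact_ne_zero (hq : ¬IsOfFinOrder q) (N : ℕ) : qFact q N ≠ 0 :=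
  prod_ne_zero_iff.2 fun k _ => one_sub_pow_ne_zero_of_not_isOfFinOrder hq k.succ_ne_zero

lemma qFact_inv (hq0 : q ≠ 0) (N : ℕ) :
    q ^ (N + 1).choose 2 * qFact q⁻¹ N = (-1) ^ N * qFact q N := by
  induction N with
  | zero => simp [qFact]
  | succ N ih =>
    rw [qFact_succ, qFact_succ, Nat.choose_succ_succ', Nat.choose_one_right, pow_add, inv_pow]
    have hqN : q ^ (N + 1) * (1 - (q ^ (N + 1))⁻¹) = q ^ (N + 1) - 1 := by
      rw [mul_sub, mul_inv_cancel₀ (pow_ne_zero _ hq0), mul_one]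
    linear_combination (q ^ (N + 1) - 1) * ih + q ^ (N + 1).choose 2 * qFact q⁻¹ N * hqN

lemma qBinom_self (hq : ¬IsOfFinOrder q) (a : ℕ) : qBinom q a a = 1 := by
  rw [qBinom, Nat.sub_self, qFact_zero, one_mul, div_self (qFact_ne_zero hq a)]

lemma qBinom_zero (hq : ¬IsOfFinOrder q) (a : ℕ) : qBinom q a 0 = 1 := by
  rw [qBinom, Nat.sub_zero, qFact_zero, mul_one, div_self (qFact_ne_zero hq a)]

lemma qBinom_succ_succ (hq : ¬IsOfFinOrder q) {m k : ℕ} (hk : k < m) :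
    qBinom q (m + 1) (k + 1) = q ^ (k + 1) * qBinom q m (k + 1) + qBinom q m k := by
  obtain ⟨r, rfl⟩ := Nat.exists_eq_add_of_lt hk
  rw [qBinom, qBinom, qBinom, show k + r + 1 + 1 - (k + 1) = r + 1 by omega,
    show k + r + 1 - (k + 1) = r by omega, show k + r + 1 - k = r + 1 by omega,
    qFact_succ, qFact_succ q r, qFact_succ q k]
  have := qFact_ne_zero hq (k + r + 1)
  have := qFact_ne_zero hq r
  have := qFact_ne_zero hq k
  have := one_sub_pow_ne_zero_of_not_isOfFinOrder hq r.succ_ne_zero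
  have := one_sub_pow_ne_zero_of_not_isOfFinOrder hq k.succ_ne_zero
  field_simp
  ring

lemma qBinom_inv (hq0 : q ≠ 0) (hq : ¬IsOfFinOrder q) (b c : ℕ) :
    q ^ (b * c) * qBinom q⁻¹ (b + c) b = qBinom q (b + c) b := by
  have hinv (N : ℕ) : qFact q⁻¹ N = (-1) ^ N * qFact q N / q ^ (N + 1).choose 2 := by
    rw [← qFact_inv hq0, mul_div_cancel_left₀ _ (pow_ne_zero _ hq0)]
  rw [qBinom, qBinom, Nat.add_sub_cancel_left, hinv, hinv, hinv, add_add_one_choose_two]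
  have := qFact_ne_zero hq b
  have := qFact_ne_zero hq c
  have := pow_ne_zero ((b + 1).choose 2) hq0
  have := pow_ne_zero ((c + 1).choose 2) hq0
  field_simp
  ring

lemma qBinom_mul_qBinom (hq : ¬IsOfFinOrder q) (j k r : ℕ) :
    qBinom q (j + k) j * qBinom q (j + k + r) (j + k)
      = qBinom q (j + k + r) j * qBinom q (k + r) k := by
  rw [qBinom, qBinom, qBinom, qBinom, Nat.add_sub_cancel_left, Nat.add_sub_cancel_left,
    Nat.add_sub_cancel_left, show j + k + r - j = k + r by omega]
  have := qFact_ne_zero hq (j + k)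
  have := qFact_ne_zero hq (k + r)
  have := qFact_ne_zero hq j
  have := qFact_ne_zero hq k
  have := qFact_ne_zero hq r
  field_simp

lemma qPoch_ne_zero {A : K} (h : ∀ i, A * q ^ i ≠ 1) (k : ℕ) : qPoch A q k ≠ 0 :=
  prod_ne_zero_iff.2 fun i _ => sub_ne_zero.2 (h i).symm

theorem sum_qBinom_mul_pow_mul_qPoch (hq : ¬IsOfFinOrder q) (W : K) (m : ℕ) :
    ∑ k ∈ range (m + 1), qBinom q m k * W ^ (m - k) * qPoch W q k = 1 := by
  induction m with
  | zero => simp [qBinom_self hq, qPoch_zero]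
  | succ m ih =>
    rw [sum_range_add_two_of_pascal
      (u := fun k => q ^ k * qBinom q m k * W ^ (m + 1 - k) * qPoch W q k)
      (v := fun k => qBinom q m k * W ^ (m - k) * qPoch W q (k + 1))]
    · rw [← ih]
      refine sum_congr rfl fun k hk => ?_
      rw [show m + 1 - k = m - k + 1 by have := mem_range.1 hk; omega, qPoch_succ]
      ring
    · simp [qBinom_zero hq]
    · simp [qBinom_self hq]
    · intro k hk
      rw [qBinom_succ_succ hq hk, show m + 1 - (k + 1) = m - k by omega]
      ring

end QAnalogues

section MinimalElement

variable {n j : ℕ} {I : Finset ℕ}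

lemma minI_empty (n : ℕ) : minI n ∅ = n := by
  simp [minI]

lemma minI_le_of_mem {i : ℕ} (hi : i ∈ I) : minI n I ≤ i :=
  min'_le _ _ (mem_insert_of_mem hi)

lemma minI_le_self (n : ℕ) (I : Finset ℕ) : minI n I ≤ n :=
  min'_le _ _ (mem_insert_self n I)

lemma minI_insert (n j : ℕ) (I : Finset ℕ) : minI n (insert j I) = min j (minI n I) := by
  rw [minI, minI, ← min'_insert j (insert n I) (insert_nonempty n I)]
  congr 1
  exact insert_comm n j I

lemma minI_eq_min' (hI : I.Nonempty) (hsub : I ⊆ range n) : minI n I = I.min' hI := by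
  rw [minI, min'_insert n I hI]
  exact min_eq_right (mem_range.1 (hsub (min'_mem I hI))).le

lemma lt_minI_iff : j < minI n I ↔ j < n ∧ ∀ i ∈ I, j < i := by
  rw [minI, lt_min'_iff, forall_mem_insert]

lemma minI_mem_insert (n : ℕ) (I : Finset ℕ) : minI n I ∈ insert n I :=
  min'_mem _ _

lemma qMultinom_insert {F : Type*} [Field F] (X : F) (hsub : I ⊆ range n) (hj : ∀ i ∈ I, j < i) :
    qMultinom X n (insert j I) = qBinom X (minI n I) j * qMultinom X n I := by
  have hsort : (insert j I).sort (· ≤ ·) = j :: I.sort (· ≤ ·) :=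
    sort_insert _ (fun i hi => (hj i hi).le) fun hjI => (hj j hjI).false
  rcases I.eq_empty_or_nonempty with rfl | hI
  · simp [qMultinom, minI_empty]
  · obtain ⟨L, hL⟩ : ∃ L, I.sort (· ≤ ·) = minI n I :: L := by
      rw [← List.head?_eq_some_iff, minI_eq_min' hI hsub, min'_eq_sorted_zero,
        List.head?_eq_getElem?]
      simp
    simp only [qMultinom, hsort, hL, List.tail_cons, List.cons_append, List.zip_cons_cons,
      List.map_cons, List.prod_cons]

end MinimalElement

section PartialSum

variable {K : Type*} [Field K]

/-- The paper's `S_{n,j}(X,Z)`. -/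
def partialSum (X Z : K) (n j : ℕ) : K :=
  ∑ I ∈ (range n).powerset.filter (fun I => minI n I = j),
    qMultinom X⁻¹ n I * ∏ i ∈ I, gp ((X ^ i * Z) ^ (n - i))

lemma partialSum_self (X Z : K) (n : ℕ) : partialSum X Z n n = 1 := by
  have : (range n).powerset.filter (fun I => minI n I = n) = {∅} := by
    ext I
    simp only [mem_filter, mem_powerset, mem_singleton]
    refine ⟨fun ⟨hsub, hmin⟩ => eq_empty_of_forall_notMem fun i hi => ?_,
      fun h => h ▸ ⟨empty_subset _, minI_empty n⟩⟩
    have := mem_range.1 (hsub hi)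
    have := minI_le_of_mem (n := n) hi
    omega
  simp [partialSum, this, qMultinom]

lemma filter_minI_eq_eq_image_insert {n j : ℕ} (hj : j < n) :
    (range n).powerset.filter (fun I => minI n I = j)
      = ((range n).powerset.filter (fun I => j < minI n I)).image (insert j) := by
  ext I
  simp only [mem_filter, mem_powerset, mem_image]
  constructor
  · rintro ⟨hsub, rfl⟩
    have hmem : minI n I ∈ I := (mem_insert.1 (minI_mem_insert n I)).resolve_left hj.ne
    refine ⟨I.erase (minI n I), ⟨(erase_subset _ _).trans hsub, lt_minI_iff.2 ⟨hj, ?_⟩⟩,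
      insert_erase hmem⟩
    intro i hi
    exact (minI_le_of_mem (mem_of_mem_erase hi)).lt_of_ne (ne_of_mem_erase hi).symm
  · rintro ⟨I, ⟨hsub, hjI⟩, rfl⟩
    exact ⟨insert_subset (mem_range.2 hj) hsub, by rw [minI_insert, min_eq_left hjI.le]⟩

lemma partialSum_of_lt (X Z : K) {n j : ℕ} (hj : j < n) :
    partialSum X Z n j = gp ((X ^ j * Z) ^ (n - j)) *
      ∑ j' ∈ Ioc j n, qBinom X⁻¹ j' j * partialSum X Z n j' := by
  set s := (range n).powerset.filter (fun I => j < minI n I)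
  have hs {I : Finset ℕ} (hI : I ∈ s) : I ⊆ range n ∧ ∀ i ∈ I, j < i := by
    rw [mem_filter, mem_powerset, lt_minI_iff] at hI
    exact ⟨hI.1, hI.2.2⟩
  have hinj : Set.InjOn (insert j) (s : Set (Finset ℕ)) := fun I hI I' hI' h => by
    rw [← erase_insert (a := j) (s := I) fun hj => ((hs hI).2 j hj).false, h,
      erase_insert fun hj => ((hs hI').2 j hj).false]
  have hmaps : ∀ I ∈ s, minI n I ∈ Ioc j n := fun I hI =>
    mem_Ioc.2 ⟨(mem_filter.1 hI).2, minI_le_self n I⟩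
  rw [partialSum, filter_minI_eq_eq_image_insert hj, sum_image hinj]
  calc _ = ∑ I ∈ s, gp ((X ^ j * Z) ^ (n - j)) * (qBinom X⁻¹ (minI n I) j *
        (qMultinom X⁻¹ n I * ∏ i ∈ I, gp ((X ^ i * Z) ^ (n - i)))) := by
        refine sum_congr rfl fun I hI => ?_
        rw [qMultinom_insert _ (hs hI).1 (hs hI).2,
          prod_insert fun hj => ((hs hI).2 j hj).false]
        ring
    _ = _ := by
        rw [← mul_sum, ← sum_fiberwise_of_maps_to hmaps]
        congr 1
        refine sum_congr rfl fun j' hj' => ?_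
        have hfiber : s.filter (fun I => minI n I = j')
            = (range n).powerset.filter (fun I => minI n I = j') := by
          rw [filter_filter]
          exact filter_congr fun I _ => ⟨And.right, fun h => ⟨h ▸ (mem_Ioc.1 hj').1, h⟩⟩
        rw [hfiber, partialSum, mul_sum]
        exact sum_congr rfl fun I hI => by rw [(mem_filter.1 hI).2]

end PartialSum

section ClosedForm

variable {K : Type*} [Field K] {q z : K}

def closedForm (q z : K) (n j : ℕ) : K :=
  qBinom q n j * z ^ (n - j) / qPoch (q ^ j * z) q (n - j)

lemma qPoch_pow_mul_ne_zero (hz : ∀ a, q ^ a * z ≠ 1) (j k : ℕ) : qPoch (q ^ j * z) q k ≠ 0 :=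
  qPoch_ne_zero (fun i => by rw [mul_right_comm, ← pow_add]; exact hz _) k

lemma qBinom_inv_mul_closedForm (hq0 : q ≠ 0) (hq : ¬IsOfFinOrder q) (hz : ∀ a, q ^ a * z ≠ 1)
    (j : ℕ) {k m : ℕ} (hk : k ≤ m) :
    qBinom q⁻¹ (j + k) j * closedForm q z (j + m) (j + k)
      = qBinom q (j + m) j / (q ^ (j * m) * qPoch (q ^ j * z) q m) *
          (qBinom q m k * (q ^ j * z) ^ (m - k) * qPoch (q ^ j * z) q k) := by
  obtain ⟨r, rfl⟩ := Nat.exists_eq_add_of_le hk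
  have hinv : qBinom q⁻¹ (j + k) j = qBinom q (j + k) j / q ^ (j * k) := by
    rw [← qBinom_inv hq0 hq, mul_div_cancel_left₀ _ (pow_ne_zero _ hq0)]
  have hPoch :
      qPoch (q ^ j * z) q (k + r) = qPoch (q ^ j * z) q k * qPoch (q ^ (j + k) * z) q r := by
    rw [qPoch_add, pow_add, mul_right_comm]
  have := qPoch_pow_mul_ne_zero hz j k
  have := qPoch_pow_mul_ne_zero hz (j + k) r
  have := pow_ne_zero (j * k) hq0
  have := pow_ne_zero (j * r) hq0
  rw [closedForm, Nat.add_sub_add_left, Nat.add_sub_cancel_left, hinv, hPoch, ← add_assoc, mul_add,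
    pow_add q (j * k), mul_pow, ← pow_mul]
  generalize qPoch (q ^ j * z) q k = P₁ at *
  generalize qPoch (q ^ (j + k) * z) q r = P₂ at *
  field_simp
  linear_combination z ^ r * qBinom_mul_qBinom hq j k r

lemma closedForm_eq_gp_mul_sum (hq0 : q ≠ 0) (hq : ¬IsOfFinOrder q)
    (hz : ∀ a, ¬IsOfFinOrder (q ^ a * z)) {n j : ℕ} (hj : j < n) :
    closedForm q z n j
      = gp ((q ^ j * z) ^ (n - j)) * ∑ j' ∈ Ioc j n, qBinom q⁻¹ j' j * closedForm q z n j' := by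
  obtain ⟨m, rfl⟩ := Nat.exists_eq_add_of_le hj.le
  have hz1 (a : ℕ) : q ^ a * z ≠ 1 := fun h => hz a (h ▸ IsOfFinOrder.one)
  set W := q ^ j * z
  have hbinomial : ∑ k ∈ Ioc 0 m, qBinom q m k * W ^ (m - k) * qPoch W q k = 1 - W ^ m := by
    have := sum_qBinom_mul_pow_mul_qPoch hq W m
    rw [Nat.range_succ_eq_Icc_zero, ← sum_Ioc_add_eq_sum_Icc (Nat.zero_le m), qBinom_zero hq,
      qPoch_zero] at this
    linear_combination this
  have hIoc : Ioc j (j + m) = (Ioc 0 m).map (addLeftEmbedding j) := by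
    rw [map_add_left_Ioc, add_zero]
  rw [hIoc, sum_map]
  simp only [addLeftEmbedding_apply]
  rw [sum_congr rfl fun k hk => qBinom_inv_mul_closedForm hq0 hq hz1 j (mem_Ioc.1 hk).2,
    ← mul_sum, hbinomial, closedForm, Nat.add_sub_cancel_left, gp]
  have hWm : W ^ m = q ^ (j * m) * z ^ m := by rw [mul_pow, pow_mul]
  have hWm1 : 1 - W ^ m ≠ 0 := one_sub_pow_ne_zero_of_not_isOfFinOrder (hz j) (by omega)
  have := qPoch_pow_mul_ne_zero hz1 j m
  have := pow_ne_zero (j * m) hq0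
  field_simp
  rw [hWm]
  ring

theorem partialSum_eq_closedForm (hq0 : q ≠ 0) (hq : ¬IsOfFinOrder q)
    (hz : ∀ a, ¬IsOfFinOrder (q ^ a * z)) {n j : ℕ} (hj : j ≤ n) :
    partialSum q z n j = closedForm q z n j := by
  rcases hj.lt_or_eq with hlt | rfl
  · rw [partialSum_of_lt q z hlt, closedForm_eq_gp_mul_sum hq0 hq hz hlt]
    congr 1
    exact sum_congr rfl fun j' hj' => by rw [partialSum_eq_closedForm hq0 hq hz (mem_Ioc.1 hj').2]
  · rw [partialSum_self, closedForm, qBinom_self hq, Nat.sub_self, qPoch_zero, pow_zero, div_one,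
      one_mul]
termination_by n - j
decreasing_by have := (mem_Ioc.1 hj').1; omega

end ClosedForm

lemma not_isOfFinOrder_algebraMap {σ R : Type*} [CommRing R] [IsDomain R]
    {p : MvPolynomial σ R} (hp : MvPolynomial.constantCoeff p = 0) :
    ¬IsOfFinOrder (algebraMap (MvPolynomial σ R) (FractionRing (MvPolynomial σ R)) p) := fun h => by
  obtain ⟨k, hk, hpk⟩ := isOfFinOrder_iff_pow_eq_one.1 h
  rw [← map_pow, ← map_one (algebraMap (MvPolynomial σ R) _)] at hpk
  have := congrArg MvPolynomial.constantCoeff (IsFractionRing.injective _ _ hpk)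
  simp [hp, hk.ne'] at this

lemma XX_ne_zero : XX ≠ 0 :=
  (map_ne_zero_iff _ (IsFractionRing.injective _ F2)).2 (MvPolynomial.X_ne_zero _)

lemma not_isOfFinOrder_XX : ¬IsOfFinOrder XX :=
  not_isOfFinOrder_algebraMap (MvPolynomial.constantCoeff_X _ _)

lemma not_isOfFinOrder_XX_pow_mul_ZZ (a : ℕ) : ¬IsOfFinOrder (XX ^ a * ZZ) := by
  rw [XX, ZZ, ← map_pow, ← map_mul]
  exact not_isOfFinOrder_algebraMap (by simp)

theorem S_n_j_identity_general (n : ℕ) (j : ℕ) (hj : j ≤ n) :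
    ∑ I ∈ (Finset.range n).powerset.filter (fun I => minI n I = j),
        qMultinom XX⁻¹ n I * ∏ i ∈ I, gp ((XX ^ i * ZZ) ^ (n - i))
      = qBinom XX n j * ZZ ^ (n - j) / qPoch (XX ^ j * ZZ) XX (n - j) :=
  partialSum_eq_closedForm XX_ne_zero not_isOfFinOrder_XX not_isOfFinOrder_XX_pow_mul_ZZ hj

theorem S_n_j_identity (n : ℕ) (hn : 1 ≤ n) (j : ℕ) (hj : j ≤ n) :
    ∑ I ∈ (Finset.range n).powerset.filter (fun I => minI n I = j),
        qMultinom XX⁻¹ n I * ∏ i ∈ I, gp ((XX ^ i * ZZ) ^ (n - i))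
      = qBinom XX n j * ZZ ^ (n - j) / qPoch (XX ^ j * ZZ) XX (n - j) :=
  S_n_j_identity_general n j hj

end
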